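/- (Closed form of the projection onto the capped box with an ℓ_1 budget, saturated case.) Let p be a positive integer, C₀ > 0, and C = {u ∈ ℝ^p : 0 ≤ u_i ≤ 1 for all i, and Σ_{i=1}^p u_i ≤ C₀}. Let s ∈ ℝ^p and suppose λ ≥ 0 satisfies Σ_{i=1}^p clamp(s_i − λ, 0, 1) = C₀. Then the metric projection of s onto C is given coordinatewise by P_C(s)_i = clamp(s_i − λ, 0, 1) for all i. -/
import Mathlib


/-- Closed form of the projection onto the capped box with an ℓ₁ budget (saturated
case): if `λ ≥ 0` satisfies `∑_i clamp(s_i - λ, 0, 1) = C₀`, then the metric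
projection of `s` onto `C = {u : 0 ≤ u_i ≤ 1, ∑_i u_i ≤ C₀}` is given coordinatewise
by `clamp(s_i - λ, 0, 1)`. -/
theorem projection_capped_box_saturated (p : ℕ) (hp : 0 < p) (C₀ : ℝ) (hC₀ : 0 < C₀)
    (C : Set (EuclideanSpace ℝ (Fin p)))
    (hC : C = {u : EuclideanSpace ℝ (Fin p) |
      (∀ i, 0 ≤ u i ∧ u i ≤ 1) ∧ ∑ i, u i ≤ C₀})
    (s : EuclideanSpace ℝ (Fin p))
    (lam : ℝ) (hlam : 0 ≤ lam)
    (hsat : ∑ i, max 0 (min (s i - lam) 1) = C₀)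
    (v : EuclideanSpace ℝ (Fin p)) (hv : ∀ i, v i = max 0 (min (s i - lam) 1)) :
    v ∈ C ∧ ∀ u ∈ C, ‖s - v‖ ≤ ‖s - u‖ := by
  subst hC
  have hvsum : ∑ i, v i = C₀ := by
    rw [Finset.sum_congr rfl fun i _ => hv i]; exact hsat
  refine ⟨⟨fun i => ?_, by rw [hvsum]⟩, ?_⟩
  · rw [hv i]
    exact ⟨le_max_left _ _, max_le (by norm_num) (min_le_right _ _)⟩
  · intro u hu
    obtain ⟨hbox, hsum⟩ := hu
    have key : ∀ i, (s i - v i) * (u i - v i) ≤ lam * (u i - v i) := by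
      intro i
      obtain ⟨h0, h1⟩ := hbox i
      have hvi := hv i
      rcases le_or_gt (s i - lam) 0 with h | h
      · have hvz : v i = 0 := by
          rw [hvi, max_eq_left]; exact le_trans (min_le_left _ _) h
        rw [hvz]
        nlinarith
      · rcases le_or_gt (s i - lam) 1 with h2 | h2
        · have hvz : v i = s i - lam := by
            rw [hvi, min_eq_left h2, max_eq_right h.le]
          rw [hvz]; nlinarith
        · have hvz : v i = 1 := by
            rw [hvi, min_eq_right h2.le, max_eq_right (by norm_num)]
          rw [hvz]; nlinarith
    have hip : ∑ i, (s i - v i) * (u i - v i) ≤ 0 := by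
      calc ∑ i, (s i - v i) * (u i - v i)
          ≤ ∑ i, lam * (u i - v i) := Finset.sum_le_sum fun i _ => key i
        _ = lam * (∑ i, u i - ∑ i, v i) := by
            rw [← Finset.mul_sum, Finset.sum_sub_distrib]
        _ ≤ 0 := mul_nonpos_of_nonneg_of_nonpos hlam (by rw [hvsum]; linarith)
    have hnorm : ∀ w : EuclideanSpace ℝ (Fin p),
        ‖s - w‖ = Real.sqrt (∑ i, (s i - w i) ^ 2) := by
      intro w
      rw [EuclideanSpace.norm_eq]
      congr 1
      exact Finset.sum_congr rfl fun i _ => by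
        simp [PiLp.sub_apply, Real.norm_eq_abs, sq_abs]
    rw [hnorm v, hnorm u]
    apply Real.sqrt_le_sqrt
    have expand : ∑ i, (s i - u i) ^ 2
        = ∑ i, (s i - v i) ^ 2 - 2 * ∑ i, (s i - v i) * (u i - v i)
          + ∑ i, (u i - v i) ^ 2 := by
      rw [Finset.sum_congr rfl (fun i _ => show (s i - u i) ^ 2
        = ((s i - v i) ^ 2 - 2 * ((s i - v i) * (u i - v i)) + (u i - v i) ^ 2) by ring)]
      rw [Finset.sum_add_distrib, Finset.sum_sub_distrib, Finset.mul_sum]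
    have hsq : (0:ℝ) ≤ ∑ i, (u i - v i) ^ 2 :=
      Finset.sum_nonneg fun i _ => sq_nonneg _
    linarith
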